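/- Let P be a property of Boolean functions on {0,1}^n, let ε > 0, and let T : ({0,1}^n × {0,1})^m × {0,1}^ℓ → {0,1} be a valid tester for P with proximity parameter ε using m samples: for every f ∈ P, the probability that T outputs 1 is at least 2/3, and for every f not in P_ε, the probability that T outputs 0 is at least 2/3, where the inputs are m i.i.d. uniform points x_i of {0,1}^n with labels f(x_i) and a uniform seed r ∈ {0,1}^ℓ. Let δ > 0 satisfy 4mδ < 1/3. Suppose f : {0,1}^n → {0,1}, f' ∈ P, and f̃ : {0,1}^n → [0,1] are such that for every one-way restriction R in R(T), both |E_{x uniform}[R(x)·(f(x) − f̃(x))]| ≤ δ and |E_{x uniform}[R(x)·(f'(x) − f̃(x))]| ≤ δ. Then f ∈ P_ε. -/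

import Mathlib

/-- Probability that the randomized tester `T` outputs `1` (Accept) on `m` i.i.d.
uniform samples from `{0,1}^n` labeled by `f`, with a uniform seed in `{0,1}^ℓ`. -/
noncomputable def acceptProb (n m l : ℕ)
    (T : (Fin m → (Fin n → Bool)) → (Fin m → Bool) → (Fin l → Bool) → Bool)
    (f : (Fin n → Bool) → Bool) : ℝ :=
  (∑ x : Fin m → (Fin n → Bool), ∑ r : Fin l → Bool,
      if T x (fun i => f (x i)) r then (1 : ℝ) else 0) / ((2 : ℝ) ^ (n * m) * 2 ^ l)

/-- Normalized Hamming distance between Boolean functions on `{0,1}^n`: the fraction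
of inputs on which they disagree. -/
noncomputable def fdist (n : ℕ) (f g : (Fin n → Bool) → Bool) : ℝ :=
  ((Finset.univ.filter fun x => f x ≠ g x).card : ℝ) / 2 ^ n

/-- `closeTo n P ε` is `P_ε`: the Boolean functions within distance `ε` of some member
of the property `P`. -/
def closeTo (n : ℕ) (P : Set ((Fin n → Bool) → Bool)) (ε : ℝ) :
    Set ((Fin n → Bool) → Bool) :=
  {f | ∃ g ∈ P, fdist n f g ≤ ε}

/-- `T` is a valid sample-based tester for `P` with proximity `ε`: it accepts every
`f ∈ P` with probability at least `2/3` and accepts every `f ∉ P_ε` with probability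
at most `1/3` (i.e. rejects with probability at least `2/3`). -/
def isValidTester (n m l : ℕ) (P : Set ((Fin n → Bool) → Bool)) (ε : ℝ)
    (T : (Fin m → (Fin n → Bool)) → (Fin m → Bool) → (Fin l → Bool) → Bool) : Prop :=
  (∀ f ∈ P, 2 / 3 ≤ acceptProb n m l T f) ∧
  (∀ f, f ∉ closeTo n P ε → acceptProb n m l T f ≤ 1 / 3)

/-! Let the tester run on soft labels: sample `j` receives an independent Bernoulli label of
mean `g j xⱼ`. Changing the labelling of a single sample slot changes the acceptance probability
by an average, over the other samples, the labels and the seed, of correlations of one-way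
restrictions of `T` with the change, hence by at most `2δ`. A hybrid argument over the `m` slots
moves both `f` and `f'` to `f̃` at cost `2mδ` each, so the acceptance probabilities of `f` and
`f'` differ by at most `4mδ < 1/3`; but `f' ∈ P` is accepted with probability at least `2/3`,
and a function outside `P_ε` with probability at most `1/3`. -/

open Finset Function
open scoped BigOperators

noncomputable def bernoulliWeight (p : ℝ) (b : Bool) : ℝ := if b then p else 1 - p

lemma bernoulliWeight_nonneg {p : ℝ} (hp : p ∈ Set.Icc (0 : ℝ) 1) (b : Bool) :
    0 ≤ bernoulliWeight p b := by
  cases b <;> simp [bernoulliWeight, hp.1, hp.2]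

lemma sum_bernoulliWeight (p : ℝ) : ∑ b, bernoulliWeight p b = 1 := by
  simp [bernoulliWeight]

lemma bernoulliWeight_sub (p q : ℝ) (b : Bool) :
    bernoulliWeight p b - bernoulliWeight q b = (if b then 1 else -1) * (p - q) := by
  cases b <;> simp [bernoulliWeight]

lemma bernoulliWeight_boole (a b : Bool) :
    bernoulliWeight (if a then 1 else 0) b = if b = a then 1 else 0 := by
  cases a <;> cases b <;> simp [bernoulliWeight]

lemma sum_prod_erase_bernoulliWeight {ι : Type*} [Fintype ι] [DecidableEq ι] (q : ι → ℝ)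
    (i : ι) : ∑ y : ι → Bool, ∏ j ∈ univ.erase i, bernoulliWeight (q j) (y j) = 2 := by
  have hfactor (y : ι → Bool) : ∏ j ∈ univ.erase i, bernoulliWeight (q j) (y j) =
      ∏ j, if j = i then 1 else bernoulliWeight (q j) (y j) := by
    rw [← mul_prod_erase univ _ (mem_univ i), if_pos rfl, one_mul]
    exact prod_congr rfl fun j hj => (if_neg (ne_of_mem_erase hj)).symm
  have hsum (j : ι) : ∑ b, (if j = i then 1 else bernoulliWeight (q j) b) =
      if j = i then 2 else 1 := by
    split_ifs
    · norm_num
    · exact sum_bernoulliWeight _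
  simp only [hfactor]
  rw [← Fintype.prod_sum (fun j b => if j = i then 1 else bernoulliWeight (q j) b),
    Fintype.prod_congr _ _ hsum, Fintype.prod_ite_eq']

section UpdateAverage

variable {ι X : Type*} [Fintype ι] [DecidableEq ι] [Fintype X] [Nonempty X]

lemma expect_expect_update (i : ι) (F : (ι → X) → ℝ) :
    𝔼 x, 𝔼 v, F (update x i v) = 𝔼 x, F x := by
  have hinv : Involutive fun p : (ι → X) × X => (update p.1 i p.2, p.1 i) := fun p => by
    simp [update_idem, update_eq_self]
  calc 𝔼 x, 𝔼 v, F (update x i v) = 𝔼 p : (ι → X) × X, F (update p.1 i p.2) :=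
        (expect_product' _ _ _).symm
    _ = 𝔼 p : (ι → X) × X, F p.1 := Fintype.expect_equiv hinv.toPerm _ _ fun _ => rfl
    _ = 𝔼 x, F x := by
        rw [← univ_product_univ, expect_product]; simp only [Fintype.expect_const]

lemma abs_expect_le_of_abs_expect_update_le (i : ι) (F : (ι → X) → ℝ) {B : ℝ}
    (h : ∀ x, |𝔼 v, F (update x i v)| ≤ B) : |𝔼 x, F x| ≤ B := by
  rw [← expect_expect_update i]
  exact (abs_expect_le _ _).trans (expect_le univ_nonempty fun x _ => h x)

end UpdateAverage

section SoftAcceptance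

variable {ι X R : Type*} [Fintype ι] [DecidableEq ι] [Fintype X] [Fintype R]

/-- The acceptance probability of `T` when the label of sample `j` is an independent
Bernoulli bit of mean `g j xⱼ`. -/
noncomputable def softAcceptProb (T : (ι → X) → (ι → Bool) → R → Bool) (g : ι → X → ℝ) : ℝ :=
  𝔼 x, 𝔼 r, ∑ y, (∏ j, bernoulliWeight (g j (x j)) (y j)) * if T x y r then 1 else 0

lemma softAcceptProb_boole (T : (ι → X) → (ι → Bool) → R → Bool) (f : X → Bool) :
    softAcceptProb T (fun _ x => if f x then 1 else 0) =
      𝔼 x, 𝔼 r, if T x (fun j => f (x j)) r then 1 else 0 := by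
  have hprod (x : ι → X) (y : ι → Bool) :
      ∏ j, bernoulliWeight (if f (x j) then 1 else 0) (y j) =
        if y = fun j => f (x j) then 1 else 0 := by
    simp only [bernoulliWeight_boole, Fintype.prod_boole, funext_iff]
  simp only [softAcceptProb, hprod, ite_mul, one_mul, zero_mul, Fintype.sum_ite_eq']

variable [Nonempty X] [Nonempty R]

lemma abs_softAcceptProb_sub_le (T : (ι → X) → (ι → Bool) → R → Bool) (i : ι)
    {g g' : ι → X → ℝ} (hg : ∀ j ≠ i, ∀ x, g j x ∈ Set.Icc (0 : ℝ) 1)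
    (heq : ∀ j ≠ i, g j = g' j) {δ : ℝ}
    (hd : ∀ xs y r, |𝔼 v, (if T (update xs i v) y r then 1 else 0) * (g i v - g' i v)| ≤ δ) :
    |softAcceptProb T g - softAcceptProb T g'| ≤ 2 * δ := by
  set c : (ι → X) → (ι → Bool) → ℝ := fun x y =>
    ∏ j ∈ univ.erase i, bernoulliWeight (g j (x j)) (y j)
  have hprod (x y) : ∏ j, bernoulliWeight (g j (x j)) (y j) -
      ∏ j, bernoulliWeight (g' j (x j)) (y j) =
        c x y * ((if y i then 1 else -1) * (g i (x i) - g' i (x i))) := by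
    have hrest : ∏ j ∈ univ.erase i, bernoulliWeight (g' j (x j)) (y j) = c x y :=
      prod_congr rfl fun j hj => by rw [heq j (ne_of_mem_erase hj)]
    rw [← mul_prod_erase univ _ (mem_univ i), ← mul_prod_erase univ _ (mem_univ i), hrest,
      ← sub_mul, bernoulliWeight_sub, mul_comm]
  have hc (x y v) : c (update x i v) y = c x y :=
    prod_congr rfl fun j hj => by rw [update_of_ne (ne_of_mem_erase hj)]
  simp only [softAcceptProb, ← expect_sub_distrib, ← sum_sub_distrib, ← sub_mul, hprod]
  refine abs_expect_le_of_abs_expect_update_le i _ fun x => ?_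
  simp only [hc, update_self]
  have hswap : 𝔼 v, 𝔼 r, ∑ y, c x y * ((if y i then 1 else -1) * (g i v - g' i v)) *
        (if T (update x i v) y r then 1 else 0) =
      𝔼 r, ∑ y, c x y * (if y i then 1 else -1) *
        𝔼 v, (if T (update x i v) y r then 1 else 0) * (g i v - g' i v) := by
    rw [expect_comm]
    refine expect_congr rfl fun r _ => ?_
    rw [expect_sum_comm]
    refine sum_congr rfl fun y _ => ?_
    rw [mul_expect]
    exact expect_congr rfl fun v _ => by ring
  have hc_nonneg (y) : 0 ≤ c x y :=
    prod_nonneg fun j hj => bernoulliWeight_nonneg (hg j (ne_of_mem_erase hj) _) _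
  have hsign (b : Bool) : |(if b then 1 else -1 : ℝ)| = 1 := by cases b <;> simp
  rw [hswap]
  refine (abs_expect_le _ _).trans (expect_le univ_nonempty fun r _ => ?_)
  calc _ ≤ ∑ y, c x y * δ := (abs_sum_le_sum_abs _ _).trans <| sum_le_sum fun y _ => by
          rw [abs_mul, abs_mul, hsign, mul_one, abs_of_nonneg (hc_nonneg y)]
          exact mul_le_mul_of_nonneg_left (hd x y r) (hc_nonneg y)
    _ = 2 * δ := by rw [← sum_mul, sum_prod_erase_bernoulliWeight]

lemma abs_softAcceptProb_const_sub_le {m : ℕ} (T : (Fin m → X) → (Fin m → Bool) → R → Bool)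
    {p q : X → ℝ} (hp : ∀ x, p x ∈ Set.Icc (0 : ℝ) 1) (hq : ∀ x, q x ∈ Set.Icc (0 : ℝ) 1)
    {δ : ℝ}
    (hd : ∀ i xs y r, |𝔼 v, (if T (update xs i v) y r then 1 else 0) * (p v - q v)| ≤ δ) :
    |softAcceptProb T (fun _ => p) - softAcceptProb T (fun _ => q)| ≤ 2 * m * δ := by
  set hybrid : ℕ → Fin m → X → ℝ := fun k j => if (j : ℕ) < k then q else p
  have hstep (k : ℕ) (hk : k < m) :
      |softAcceptProb T (hybrid k) - softAcceptProb T (hybrid (k + 1))| ≤ 2 * δ := by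
    refine abs_softAcceptProb_sub_le T ⟨k, hk⟩ (fun j _ x => ?_) (fun j hj => ?_) ?_
    · by_cases hj : (j : ℕ) < k
      · simpa [hybrid, hj] using hq x
      · simpa [hybrid, hj] using hp x
    · have hjk : (j : ℕ) ≠ k := fun h => hj (Fin.ext h)
      have hlt : (j : ℕ) < k ↔ (j : ℕ) < k + 1 := by omega
      simp only [hybrid, hlt]
    · simpa [hybrid] using hd ⟨k, hk⟩
  have h0 : hybrid 0 = fun _ => p := by simp [hybrid]
  have hm : hybrid m = fun _ => q := by simp [hybrid]
  rw [← h0, ← hm, ← sum_range_sub' fun k => softAcceptProb T (hybrid k)]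
  calc _ ≤ ∑ k ∈ range m, 2 * δ :=
        (abs_sum_le_sum_abs _ _).trans <| sum_le_sum fun k hk => hstep k (mem_range.mp hk)
    _ = 2 * m * δ := by rw [sum_const, card_range, nsmul_eq_mul]; ring

end SoftAcceptance

lemma expect_eq_sum_one_div_two_pow_mul {n : ℕ} (h : (Fin n → Bool) → ℝ) :
    𝔼 x, h x = ∑ x, 1 / 2 ^ n * h x := by
  rw [Fintype.expect_eq_sum_div_card, ← mul_sum]
  simp [div_eq_inv_mul]

lemma acceptProb_eq_softAcceptProb (n m l : ℕ)
    (T : (Fin m → (Fin n → Bool)) → (Fin m → Bool) → (Fin l → Bool) → Bool)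
    (f : (Fin n → Bool) → Bool) :
    acceptProb n m l T f = softAcceptProb T (fun _ x => if f x then 1 else 0) := by
  simp only [softAcceptProb_boole, acceptProb, Fintype.expect_eq_sum_div_card, ← sum_div,
    div_div, Fintype.card_fun, Fintype.card_bool, Fintype.card_fin]
  push_cast
  rw [pow_mul, mul_comm]

theorem stmt_9_general (n m l : ℕ) (P : Set ((Fin n → Bool) → Bool)) (ε : ℝ)
    (T : (Fin m → (Fin n → Bool)) → (Fin m → Bool) → (Fin l → Bool) → Bool)
    (hT : isValidTester n m l P ε T)
    (δ : ℝ) (hδm : 4 * m * δ < 1 / 3)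
    (f : (Fin n → Bool) → Bool) (f' : (Fin n → Bool) → Bool) (hf' : f' ∈ P)
    (ftil : (Fin n → Bool) → ℝ) (hftil : ∀ x, ftil x ∈ Set.Icc (0 : ℝ) 1)
    (hregf : ∀ (i : Fin m) (xs : Fin m → (Fin n → Bool)) (y : Fin m → Bool)
        (r : Fin l → Bool),
      |∑ x : Fin n → Bool, ((1 : ℝ) / 2 ^ n) *
        ((if T (Function.update xs i x) y r then (1 : ℝ) else 0) *
          ((if f x then (1 : ℝ) else 0) - ftil x))| ≤ δ)
    (hregf' : ∀ (i : Fin m) (xs : Fin m → (Fin n → Bool)) (y : Fin m → Bool)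
        (r : Fin l → Bool),
      |∑ x : Fin n → Bool, ((1 : ℝ) / 2 ^ n) *
        ((if T (Function.update xs i x) y r then (1 : ℝ) else 0) *
          ((if f' x then (1 : ℝ) else 0) - ftil x))| ≤ δ) :
    f ∈ closeTo n P ε := by
  have hclose (g : (Fin n → Bool) → Bool)
      (hreg : ∀ i xs y r, |∑ x : Fin n → Bool, ((1 : ℝ) / 2 ^ n) *
        ((if T (update xs i x) y r then (1 : ℝ) else 0) *
          ((if g x then (1 : ℝ) else 0) - ftil x))| ≤ δ) :
      |acceptProb n m l T g - softAcceptProb T (fun _ => ftil)| ≤ 2 * m * δ := by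
    rw [acceptProb_eq_softAcceptProb]
    refine abs_softAcceptProb_const_sub_le T (fun x => ?_) hftil fun i xs y r => ?_
    · split <;> simp
    · rw [expect_eq_sum_one_div_two_pow_mul]
      exact hreg i xs y r
  by_contra hfar
  have hf_close := abs_le.mp (hclose f hregf)
  have hf'_close := abs_le.mp (hclose f' hregf')
  linarith [hT.1 f' hf', hT.2 f hfar]

/-- If `T` is a valid tester for `P` with proximity `ε`, `4 m δ < 1/3`, `f' ∈ P`, and
`f̃` fools every one-way restriction of `T` against both `f` and `f'` up to error `δ`
under the uniform distribution, then `f ∈ P_ε`. -/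
theorem stmt_9 (n m l : ℕ) (P : Set ((Fin n → Bool) → Bool)) (ε : ℝ) (hε : 0 < ε)
    (T : (Fin m → (Fin n → Bool)) → (Fin m → Bool) → (Fin l → Bool) → Bool)
    (hT : isValidTester n m l P ε T)
    (δ : ℝ) (hδ : 0 < δ) (hδm : 4 * m * δ < 1 / 3)
    (f : (Fin n → Bool) → Bool) (f' : (Fin n → Bool) → Bool) (hf' : f' ∈ P)
    (ftil : (Fin n → Bool) → ℝ) (hftil : ∀ x, ftil x ∈ Set.Icc (0 : ℝ) 1)
    (hregf : ∀ (i : Fin m) (xs : Fin m → (Fin n → Bool)) (y : Fin m → Bool)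
        (r : Fin l → Bool),
      |∑ x : Fin n → Bool, ((1 : ℝ) / 2 ^ n) *
        ((if T (Function.update xs i x) y r then (1 : ℝ) else 0) *
          ((if f x then (1 : ℝ) else 0) - ftil x))| ≤ δ)
    (hregf' : ∀ (i : Fin m) (xs : Fin m → (Fin n → Bool)) (y : Fin m → Bool)
        (r : Fin l → Bool),
      |∑ x : Fin n → Bool, ((1 : ℝ) / 2 ^ n) *
        ((if T (Function.update xs i x) y r then (1 : ℝ) else 0) *
          ((if f' x then (1 : ℝ) else 0) - ftil x))| ≤ δ) :
    f ∈ closeTo n P ε :=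
  stmt_9_general n m l P ε T hT δ hδm f f' hf' ftil hftil hregf hregf'
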